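/- arXiv:1304.5669 — 2 statements merged into one kernel-verified Lean document; each statement's English description precedes it below -/
import Mathlib

section
/- Let c ≥ 2, m ∈ S_c, and consider the equivalence on S_n generated by replacing contiguous length-c factors whose standardizations are cyclic shifts of m by rearrangements whose standardizations are also cyclic shifts of m. For any j with 1 ≤ j ≤ n−1 and n = c+1: (j ⇀ m) ≡ (m ↼ (j+1)) and (m ↼ j) ≡ ((j+1) ⇀ m), where i ⇀ w denotes the word obtained from w by incrementing all letters ≥ i and prepending i, and w ↼ i denotes incrementing all letters ≥ i and appending i on the right. -/
/-- The standardization (order permutation) of a word with distinct letters. -/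
def stdz (w : List ℕ) : List ℕ :=
  w.map (fun x => 1 + w.countP (fun y => decide (y < x)))

/-- `u` is a cyclic shift of `m`. -/
def IsCyclicShiftOf (u m : List ℕ) : Prop := ∃ a ≤ m.length, u = m.rotate a

/-- One pattern-replacement move for the cyclic-shift relation attached to `m`. -/
def StepCyc (m : List ℕ) (φ ψ : List ℕ) : Prop :=
  ∃ a u v b : List ℕ, φ = a ++ u ++ b ∧ ψ = a ++ v ++ b ∧
    u.length = m.length ∧ u.Perm v ∧
    IsCyclicShiftOf (stdz u) m ∧ IsCyclicShiftOf (stdz v) m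

/-- `i ⇀ w`: increment every letter of `w` that is `≥ i`, then prepend `i`. -/
def harpL (i : ℕ) (w : List ℕ) : List ℕ :=
  i :: w.map (fun x => if i ≤ x then x + 1 else x)

/-- `w ↼ i`: increment every letter of `w` that is `≥ i`, then append `i` on the right. -/
def harpR (w : List ℕ) (i : ℕ) : List ℕ :=
  w.map (fun x => if i ≤ x then x + 1 else x) ++ [i]

/-!
Write `m = p ++ j :: q`. Since `m` is its own standardization and incrementing letters preserves
their order, rotating the block `m` inside a word `i ⇀ m` or `m ↼ i` is a single move. Inside
`j ⇀ m` rotate it to `q ++ p ++ [j]`, inside `m ↼ (j+1)` to `j :: (q ++ p)`: both give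
`j :: (q ++ p)⁺ ++ [j+1]`, where `⁺` increments the letters `≥ j`, because `q ++ p` does not
contain `j` and so is incremented alike by `j` and by `j+1`. Symmetrically, `m ↼ j` and
`(j+1) ⇀ m` both move to `(j+1) :: (q ++ p)⁺ ++ [j]`.
-/

def incrFrom (i x : ℕ) : ℕ := if i ≤ x then x + 1 else x

lemma strictMono_incrFrom (i : ℕ) : StrictMono (incrFrom i) := by
  intro a b h
  unfold incrFrom
  split_ifs <;> omega

lemma incrFrom_self (j : ℕ) : incrFrom j j = j + 1 := if_pos le_rfl

lemma incrFrom_succ_self (j : ℕ) : incrFrom (j + 1) j = j := if_neg (by omega)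

lemma incrFrom_succ_of_ne {j x : ℕ} (h : x ≠ j) : incrFrom (j + 1) x = incrFrom j x := by
  unfold incrFrom
  split_ifs <;> omega

lemma harpL_eq (i : ℕ) (w : List ℕ) : harpL i w = i :: w.map (incrFrom i) := rfl

lemma harpR_eq (w : List ℕ) (i : ℕ) : harpR w i = w.map (incrFrom i) ++ [i] := rfl

lemma stdz_map_of_strictMono (w : List ℕ) {f : ℕ → ℕ} (hf : StrictMono f) :
    stdz (w.map f) = stdz w := by
  simp only [stdz, List.map_map, List.countP_map]
  refine List.map_congr_left fun x _ => ?_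
  simp [Function.comp_def, hf.lt_iff_lt]

lemma countP_range'_lt {c x : ℕ} (hx : x ∈ List.range' 1 c) :
    (List.range' 1 c).countP (fun y => decide (y < x)) = x - 1 := by
  rw [List.mem_range'_1] at hx
  have hsplit : List.range' 1 c = List.range' 1 (x - 1) ++ List.range' x (c + 1 - x) := by
    have := @List.range'_append_1 1 (x - 1) (c + 1 - x)
    rwa [show 1 + (x - 1) = x by omega, show x - 1 + (c + 1 - x) = c by omega, eq_comm] at this
  have hbelow : (List.range' 1 (x - 1)).countP (fun y => decide (y < x)) = x - 1 := by
    rw [List.countP_eq_length.mpr fun y hy => by simp [List.mem_range'_1] at hy ⊢; omega]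
    simp
  have habove : (List.range' x (c + 1 - x)).countP (fun y => decide (y < x)) = 0 :=
    List.countP_eq_zero.mpr fun y hy => by simp [List.mem_range'] at hy ⊢; omega
  rw [hsplit, List.countP_append, hbelow, habove, add_zero]

lemma stdz_eq_self_of_perm_range' {c : ℕ} {w : List ℕ} (hw : w.Perm (List.range' 1 c)) :
    stdz w = w := by
  refine (List.map_congr_left fun x hx => ?_).trans (List.map_id w)
  have hx' := hw.mem_iff.mp hx
  rw [hw.countP_eq, countP_range'_lt hx', id]
  rw [List.mem_range'_1] at hx'
  omega

lemma stepCyc_map_rotate {c : ℕ} {m : List ℕ} (hm : m.Perm (List.range' 1 c)) {f : ℕ → ℕ}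
    (hf : StrictMono f) {a : ℕ} (ha : a ≤ m.length) (pre post : List ℕ) :
    StepCyc m (pre ++ m.map f ++ post) (pre ++ (m.rotate a).map f ++ post) := by
  refine ⟨pre, m.map f, (m.rotate a).map f, post, rfl, rfl, List.length_map f,
    (m.rotate_perm a).symm.map f, ⟨0, Nat.zero_le _, ?_⟩, ⟨a, ha, ?_⟩⟩
  · rw [stdz_map_of_strictMono _ hf, stdz_eq_self_of_perm_range' hm, List.rotate_zero]
  · rw [stdz_map_of_strictMono _ hf, stdz_eq_self_of_perm_range' ((m.rotate_perm a).trans hm)]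

section Rotations

variable {c : ℕ} {m p q : List ℕ} {j : ℕ}

lemma stepCyc_harpL (hm : m.Perm (List.range' 1 c)) (hpq : m = p ++ j :: q) (i : ℕ) :
    StepCyc m (harpL i m) (i :: (q ++ p).map (incrFrom i) ++ [incrFrom i j]) := by
  have hrot : m.rotate (p ++ [j]).length = q ++ p ++ [j] := by
    rw [hpq, ← List.singleton_append, ← List.append_assoc, List.rotate_append_length_eq,
      List.append_assoc]
  have := stepCyc_map_rotate hm (strictMono_incrFrom i) (a := (p ++ [j]).length)
    (by simp [hpq]) [i] []
  rw [hrot] at this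
  simpa [harpL_eq] using this

lemma stepCyc_harpR (hm : m.Perm (List.range' 1 c)) (hpq : m = p ++ j :: q) (i : ℕ) :
    StepCyc m (harpR m i) (incrFrom i j :: (q ++ p).map (incrFrom i) ++ [i]) := by
  have hrot : m.rotate p.length = j :: (q ++ p) := by
    rw [hpq, List.rotate_append_length_eq, List.cons_append]
  have := stepCyc_map_rotate hm (strictMono_incrFrom i) (a := p.length) (by simp [hpq]) [] [i]
  rw [hrot] at this
  simpa [harpR_eq] using this

end Rotations

lemma Relation.EqvGen.of_rel_of_rel {α : Type*} {r : α → α → Prop} {a b x : α} (ha : r a x)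
    (hb : r b x) : Relation.EqvGen r a b :=
  .trans _ _ _ (.rel _ _ ha) (.symm _ _ (.rel _ _ hb))

lemma map_incrFrom_succ {j : ℕ} {l : List ℕ} (hj : j ∉ l) :
    l.map (incrFrom (j + 1)) = l.map (incrFrom j) :=
  List.map_congr_left fun _ hx => incrFrom_succ_of_ne (ne_of_mem_of_not_mem hx hj)

theorem stmt5_general (c : ℕ) (m : List ℕ) (hm : m.Perm (List.range' 1 c))
    (j : ℕ) (hj1 : 1 ≤ j) (hj2 : j ≤ (c + 1) - 1) :
    Relation.EqvGen (StepCyc m) (harpL j m) (harpR m (j + 1)) ∧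
    Relation.EqvGen (StepCyc m) (harpR m j) (harpL (j + 1) m) := by
  have hjm : j ∈ m := hm.mem_iff.mpr (List.mem_range'_1.mpr ⟨hj1, by omega⟩)
  obtain ⟨p, q, hpq⟩ := List.append_of_mem hjm
  have hj : j ∉ q ++ p := by
    have hnd := hpq ▸ hm.nodup_iff.mpr List.nodup_range'
    rw [List.nodup_middle, List.nodup_cons] at hnd
    exact List.perm_append_comm.mem_iff.not.mp hnd.1
  constructor
  · refine .of_rel_of_rel (stepCyc_harpL hm hpq j) ?_
    rw [incrFrom_self, ← map_incrFrom_succ hj]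
    simpa only [incrFrom_succ_self] using stepCyc_harpR hm hpq (j + 1)
  · refine .of_rel_of_rel (stepCyc_harpR hm hpq j) ?_
    rw [incrFrom_self, ← map_incrFrom_succ hj]
    simpa only [incrFrom_succ_self] using stepCyc_harpL hm hpq (j + 1)

/-- For `m ∈ S_c` and `n = c + 1`: for every `1 ≤ j ≤ n - 1`, we have
`(j ⇀ m) ≡ (m ↼ (j+1))` and `(m ↼ j) ≡ ((j+1) ⇀ m)` under the cyclic-shift replacement
relation attached to `m`. -/
theorem stmt5 (c : ℕ) (hc : 2 ≤ c) (m : List ℕ) (hm : m.Perm (List.range' 1 c))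
    (j : ℕ) (hj1 : 1 ≤ j) (hj2 : j ≤ (c + 1) - 1) :
    Relation.EqvGen (StepCyc m) (harpL j m) (harpR m (j + 1)) ∧
    Relation.EqvGen (StepCyc m) (harpR m j) (harpL (j + 1) m) :=
  stmt5_general c m hm j hj1 hj2
end

section
/- Let c be odd ≥ 3 and m ∈ S_c. The equivalence on S_n generated by replacing a contiguous c-letter factor whose standardization is a cyclic shift of m by a rearrangement of the same letters whose standardization is also a cyclic shift of m preserves the sign of a permutation: if φ ≡ ψ then sgn(φ) = sgn(ψ). -/
/-- The number of inversions of a word. -/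
def inv (w : List ℕ) : ℕ :=
  ((Finset.range w.length ×ˢ Finset.range w.length).filter
    (fun p => p.1 < p.2 ∧ w.getD p.2 0 < w.getD p.1 0)).card

/-!
Inversion counts are computed block by block: for a word `a ++ u ++ b`, replacing `u` by a
rearrangement `v` changes neither the inversions inside `a` and `b` nor those between different
blocks, so the parity of `inv` changes by `inv v - inv u`. Standardization preserves `inv`, and
rotating `x :: t` to `t ++ [x]` turns the `#{y ∈ t | y < x}` inversions of `x` into
`#{y ∈ t | x < y} = |t| - #{y ∈ t | y < x}` ones, an even change when the word has odd length.
Hence every factor whose standardization is a cyclic shift of `m` has the parity of `inv m`.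
-/

open Finset

lemma sum_ite_getD_lt_eq_countP (x : ℕ) (t : List ℕ) :
    (∑ j ∈ range t.length, if t.getD j 0 < x then 1 else 0) = t.countP (· < x) := by
  induction t with
  | nil => rfl
  | cons a t ih =>
    rw [List.length_cons, sum_range_succ', List.countP_cons, ← ih]
    simp only [List.getD_cons_succ, List.getD_cons_zero, decide_eq_true_eq]

lemma inv_eq_sum (w : List ℕ) : inv w = ∑ i ∈ range w.length, ∑ j ∈ range w.length,
    if i < j ∧ w.getD j 0 < w.getD i 0 then 1 else 0 := by
  rw [inv, card_filter, sum_product]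

lemma inv_cons (x : ℕ) (t : List ℕ) : inv (x :: t) = t.countP (· < x) + inv t := by
  rw [inv_eq_sum, inv_eq_sum, List.length_cons, sum_range_succ', sum_range_succ',
    ← sum_ite_getD_lt_eq_countP, add_comm]
  congr 1
  · simp only [List.getD_cons_succ, List.getD_cons_zero, Nat.lt_irrefl, false_and, if_false,
      add_zero, Nat.succ_pos, true_and]
  · refine sum_congr rfl fun i _ => ?_
    rw [sum_range_succ']
    simp only [List.getD_cons_succ, Nat.add_lt_add_iff_right, Nat.not_lt_zero, false_and,
      if_false, add_zero]

def crossInv (s t : List ℕ) : ℕ :=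
  (s.map fun x => t.countP (· < x)).sum

lemma inv_append (s t : List ℕ) : inv (s ++ t) = inv s + crossInv s t + inv t := by
  induction s with
  | nil => simp [crossInv, inv_eq_sum]
  | cons x s ih =>
    simp only [List.cons_append, inv_cons, ih, crossInv, List.map_cons, List.sum_cons,
      List.countP_append]
    ring

lemma crossInv_append_left (s₁ s₂ t : List ℕ) :
    crossInv (s₁ ++ s₂) t = crossInv s₁ t + crossInv s₂ t := by
  simp [crossInv]

lemma List.Perm.crossInv_left {s₁ s₂ : List ℕ} (h : s₁.Perm s₂) (t : List ℕ) :
    crossInv s₁ t = crossInv s₂ t :=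
  (h.map _).sum_eq

lemma List.Perm.crossInv_right (s : List ℕ) {t₁ t₂ : List ℕ} (h : t₁.Perm t₂) :
    crossInv s t₁ = crossInv s t₂ := by
  simp only [crossInv, h.countP_eq]

lemma crossInv_singleton_right (t : List ℕ) (x : ℕ) :
    crossInv t [x] = t.countP (x < ·) := by
  induction t with
  | nil => rfl
  | cons a t ih =>
    simp only [crossInv, List.map_cons, List.sum_cons, List.countP_cons, List.countP_nil,
      zero_add] at ih ⊢
    rw [ih, add_comm]

lemma countP_lt_add_countP_gt {x : ℕ} {t : List ℕ} (hx : x ∉ t) :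
    t.countP (· < x) + t.countP (x < ·) = t.length := by
  rw [List.length_eq_countP_add_countP (· < x)]
  congr 1
  refine List.countP_congr fun y hy => ?_
  have : y ≠ x := by rintro rfl; exact hx hy
  simp only [decide_eq_true_eq, not_lt]
  omega

lemma inv_rotate_one_add_inv {x : ℕ} {t : List ℕ} (hx : x ∉ t) :
    inv ((x :: t).rotate 1) + inv (x :: t) = 2 * inv t + t.length := by
  rw [List.rotate_cons_succ, List.rotate_zero, inv_append, inv_cons, crossInv_singleton_right,
    inv_cons, List.countP_nil, ← countP_lt_add_countP_gt hx]
  simp only [inv_eq_sum, List.length_nil, range_zero, sum_empty]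
  ring

lemma inv_rotate_one_mod_two {w : List ℕ} (hw : w.Nodup) (ho : Odd w.length) :
    inv (w.rotate 1) % 2 = inv w % 2 := by
  obtain _ | ⟨x, t⟩ := w
  · rfl
  · have h := inv_rotate_one_add_inv (List.nodup_cons.mp hw).1
    obtain ⟨k, hk⟩ : Even t.length := by simpa [Nat.odd_add_one] using ho
    omega

lemma inv_rotate_mod_two {w : List ℕ} (hw : w.Nodup) (ho : Odd w.length) (a : ℕ) :
    inv (w.rotate a) % 2 = inv w % 2 := by
  induction a with
  | zero => rw [List.rotate_zero]
  | succ a ih =>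
    rw [← List.rotate_rotate, inv_rotate_one_mod_two (List.nodup_rotate.mpr hw)
      (by rwa [List.length_rotate]), ih]

lemma inv_map_of_strictMonoOn {f : ℕ → ℕ} {u : List ℕ} (hf : StrictMonoOn f {x | x ∈ u}) :
    inv (u.map f) = inv u := by
  induction u with
  | nil => rfl
  | cons x t ih =>
    rw [List.map_cons, inv_cons, inv_cons, List.countP_map,
      ih (hf.mono fun y hy => List.mem_cons_of_mem x hy)]
    congr 1
    refine List.countP_congr fun y hy => ?_
    simp only [Function.comp_apply, decide_eq_true_eq]
    exact hf.lt_iff_lt (List.mem_cons_of_mem x hy) List.mem_cons_self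

lemma countP_lt_lt_countP_lt {u : List ℕ} {x y : ℕ} (hy : y ∈ u) (hxy : y < x) :
    u.countP (· < y) < u.countP (· < x) := by
  induction u with
  | nil => cases hy
  | cons a t ih =>
    have hle : t.countP (· < y) ≤ t.countP (· < x) :=
      List.countP_mono_left fun z _ hz => by simp only [decide_eq_true_eq] at hz ⊢; omega
    rw [List.countP_cons, List.countP_cons]
    simp only [decide_eq_true_eq]
    obtain rfl | hy := List.mem_cons.mp hy
    · split_ifs <;> omega
    · have := ih hy
      split_ifs <;> omega

lemma strictMonoOn_countP_lt (u : List ℕ) :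
    StrictMonoOn (fun x => u.countP (· < x)) {x | x ∈ u} :=
  fun _ hy _ _ hyx => countP_lt_lt_countP_lt hy hyx

lemma inv_stdz (u : List ℕ) : inv (stdz u) = inv u :=
  inv_map_of_strictMonoOn ((strictMonoOn_countP_lt u).const_add 1)

lemma IsCyclicShiftOf.inv_mod_two {u m : List ℕ} (h : IsCyclicShiftOf (stdz u) m)
    (hm : m.Nodup) (ho : Odd m.length) : inv u % 2 = inv m % 2 := by
  obtain ⟨a, -, ha⟩ := h
  rw [← inv_stdz, ha, inv_rotate_mod_two hm ho]

lemma StepCyc.inv_mod_two {m φ ψ : List ℕ} (hm : m.Nodup) (ho : Odd m.length)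
    (h : StepCyc m φ ψ) : inv φ % 2 = inv ψ % 2 := by
  obtain ⟨a, u, v, b, rfl, rfl, -, huv, hu, hv⟩ := h
  have huv_mod := (hu.inv_mod_two hm ho).trans (hv.inv_mod_two hm ho).symm
  simp only [inv_append, crossInv_append_left, huv.crossInv_right a, huv.crossInv_left b]
  omega

theorem stmt18_general (c : ℕ) (hco : Odd c) (m : List ℕ)
    (hm : m.Perm (List.range' 1 c)) (φ ψ : List ℕ)
    (h : Relation.EqvGen (StepCyc m) φ ψ) :
    (Even (inv φ) ↔ Even (inv ψ)) := by
  have hm_nodup : m.Nodup := hm.nodup_iff.mpr List.nodup_range'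
  have hm_odd : Odd m.length := by rwa [hm.length_eq, List.length_range']
  have h_mod : inv φ % 2 = inv ψ % 2 :=
    Setoid.ker_def.mp <| Setoid.eqvGen_le (s := Setoid.ker fun w => inv w % 2)
      (fun _ _ => StepCyc.inv_mod_two hm_nodup hm_odd) h
  rw [Nat.even_iff, Nat.even_iff, h_mod]

/-- For odd `c ≥ 3` and `m ∈ S_c`, the cyclic-shift replacement equivalence preserves the
sign of a permutation: equivalent permutations have inversion counts of equal parity. -/
theorem stmt18 (c : ℕ) (hc : 3 ≤ c) (hco : Odd c) (m : List ℕ)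
    (hm : m.Perm (List.range' 1 c)) (φ ψ : List ℕ)
    (h : Relation.EqvGen (StepCyc m) φ ψ) :
    (Even (inv φ) ↔ Even (inv ψ)) :=
  stmt18_general c hco m hm φ ψ h
end
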